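/- arXiv:2011.10403 — 3 statements merged into one kernel-verified Lean document; each statement's English description precedes it below -/
import Mathlib

section
/- No complete bridge graph that is a minimally connected prime graph can be generated from a minimal prime graph; that is, if Γ is a minimal prime graph and Γ* is a graph containing a vertex α whose deletion leaves an induced subgraph isomorphic to Γ, then Γ* is not isomorphic to any complete bridge graph B_{m,n} with m ≥ n > 1 or with m ∈ {1,2} and n = 1. -/
open SimpleGraph

def bridgeAdj (m n : ℕ) : (Fin m ⊕ Fin n) → (Fin m ⊕ Fin n) → Prop
  | Sum.inl i, Sum.inl j => i ≠ j
  | Sum.inr i, Sum.inr j => i ≠ j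
  | Sum.inl i, Sum.inr j => i.val = 0 ∧ j.val = 0
  | Sum.inr i, Sum.inl j => i.val = 0 ∧ j.val = 0

/-- The complete bridge graph `B_{m,n}`: two disjoint complete graphs on `m` and `n`
vertices respectively, joined by exactly one edge (the bridge). -/
def completeBridgeGraph (m n : ℕ) : SimpleGraph (Fin m ⊕ Fin n) where
  Adj := bridgeAdj m n
  symm := ⟨by
    rintro (a | a) (b | b) h <;> simp_all [bridgeAdj] <;> tauto⟩
  loopless := ⟨by
    rintro (a | a) h <;> simp_all [bridgeAdj]⟩

/-- A minimally connected prime graph (MCPG). -/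
def IsMCPG {V : Type} [Fintype V] (Γ : SimpleGraph V) : Prop :=
  2 ≤ Fintype.card V ∧ Γ.Connected ∧ Γᶜ.CliqueFree 3 ∧ Γᶜ.Colorable 3 ∧
    ∀ e ∈ Γ.edgeSet,
      ¬((Γ.deleteEdges {e}).Connected ∧ (Γ.deleteEdges {e})ᶜ.CliqueFree 3 ∧
        (Γ.deleteEdges {e})ᶜ.Colorable 3)

/-- A minimal prime graph (MPG). -/
def IsMPG {V : Type} [Fintype V] (Γ : SimpleGraph V) : Prop :=
  2 ≤ Fintype.card V ∧ Γ.Connected ∧ Γᶜ.CliqueFree 3 ∧ Γᶜ.Colorable 3 ∧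
    ∀ e ∈ Γ.edgeSet,
      ¬((Γ.deleteEdges {e})ᶜ.CliqueFree 3 ∧ (Γ.deleteEdges {e})ᶜ.Colorable 3)

/-- A possibly disconnected minimal prime graph (PDMPG). -/
def IsPDMPG {V : Type} [Fintype V] (Γ : SimpleGraph V) : Prop :=
  Γᶜ.CliqueFree 3 ∧ Γᶜ.Colorable 3 ∧
    ∀ e ∈ Γ.edgeSet,
      ¬((Γ.deleteEdges {e})ᶜ.CliqueFree 3 ∧ (Γ.deleteEdges {e})ᶜ.Colorable 3)

/-!
The complement of `B_{m,n}` is bipartite (two vertices on the same side are adjacent), so the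
complement of every induced subgraph of `B_{m,n}` is bipartite as well. On the other hand the
complement of a minimal prime graph `Γ` is never bipartite: a 2-colouring of `Γᶜ` that separates
the ends of an edge `e` of `Γ` still colours `(Γ - e)ᶜ`, contradicting minimality, so it is
constant along the edges of the connected graph `Γ`. Then `Γᶜ` has no edges, so every map to
`Bool` colours it, in particular one separating the ends of an edge of `Γ`.
-/

namespace SimpleGraph

theorem Reachable.apply_eq_of_adj {V β : Type*} {G : SimpleGraph V} (c : V → β)
    (hc : ∀ u v, G.Adj u v → c u = c v) {u v : V} (h : G.Reachable u v) : c u = c v := by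
  obtain ⟨p⟩ := h
  induction p with
  | nil => rfl
  | cons hadj _ ih => exact (hc _ _ hadj).trans ih

theorem colorable_two_compl_deleteEdges {V : Type*} {G : SimpleGraph V} (c : Gᶜ.Coloring Bool)
    {u v : V} (huv : c u ≠ c v) : (G.deleteEdges {s(u, v)})ᶜ.Colorable 2 := by
  refine (Coloring.mk c fun {x y} hxy => ?_).colorable
  rw [compl_adj, deleteEdges_adj] at hxy
  by_cases hG : G.Adj x y
  · have hedge : s(x, y) = s(u, v) := by
      by_contra h
      exact hxy.2 ⟨hG, h⟩
    rcases Sym2.eq_iff.mp hedge with ⟨rfl, rfl⟩ | ⟨rfl, rfl⟩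
    · exact huv
    · exact huv.symm
  · exact c.valid ((compl_adj G x y).mpr ⟨hxy.1, hG⟩)

theorem compl_completeBridgeGraph_colorable_two (m n : ℕ) :
    (completeBridgeGraph m n)ᶜ.Colorable 2 := by
  refine (Coloring.mk Sum.isLeft fun {x y} hxy => ?_).colorable
  rw [compl_adj] at hxy
  rcases x with i | i <;> rcases y with j | j
  · exact (hxy.2 fun hij => hxy.1 (congrArg _ hij)).elim
  · simp
  · simp
  · exact (hxy.2 fun hij => hxy.1 (congrArg _ hij)).elim

end SimpleGraph

theorem IsMPG.not_colorable_two_compl_deleteEdges {V : Type} [Fintype V] {Γ : SimpleGraph V}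
    (hΓ : IsMPG Γ) {e : Sym2 V} (he : e ∈ Γ.edgeSet) : ¬ (Γ.deleteEdges {e})ᶜ.Colorable 2 :=
  fun h => hΓ.2.2.2.2 e he ⟨h.cliqueFree (by norm_num), h.mono (by norm_num)⟩

theorem IsMPG.not_colorable_two_compl {V : Type} [Fintype V] {Γ : SimpleGraph V}
    (hΓ : IsMPG Γ) : ¬ Γᶜ.Colorable 2 := by
  classical
  have hedge : ∀ c : Γᶜ.Coloring Bool, ∀ u v, Γ.Adj u v → c u = c v := fun c u v huv => by
    by_contra hne
    exact hΓ.not_colorable_two_compl_deleteEdges huv (colorable_two_compl_deleteEdges c hne)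
  intro hcol
  let c : Γᶜ.Coloring Bool := hcol.toColoring (by simp)
  have hcompl_edgeless : ∀ x y, ¬ Γᶜ.Adj x y := fun x y hxy =>
    c.valid hxy ((hΓ.2.1.preconnected x y).apply_eq_of_adj c (hedge c))
  obtain ⟨u, v, hne⟩ := Fintype.exists_pair_of_one_lt_card hΓ.1
  have huv : Γ.Adj u v := by
    by_contra h
    exact hcompl_edgeless u v ((compl_adj Γ u v).mpr ⟨hne, h⟩)
  let separate : Γᶜ.Coloring Bool :=
    Coloring.mk (fun x => decide (x = u)) fun {x y} hxy => absurd hxy (hcompl_edgeless x y)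
  have : decide (u = u) = decide (v = u) := hedge separate u v huv
  simp [Ne.symm hne] at this

theorem stmt4_general {V W : Type} [Fintype V]
    (Γ : SimpleGraph V) (hΓ : IsMPG Γ)
    (Γstar : SimpleGraph W)
    (α : W) (hgen : Nonempty ((Γstar.induce {w | w ≠ α}) ≃g Γ))
    (m n : ℕ) :
    ¬ Nonempty (Γstar ≃g completeBridgeGraph m n) := by
  rintro ⟨f⟩
  obtain ⟨g⟩ := hgen
  have hembed : Γ ↪g completeBridgeGraph m n :=
    f.toEmbedding.comp ((Embedding.induce _).comp g.symm.toEmbedding)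
  exact hΓ.not_colorable_two_compl
    ((compl_completeBridgeGraph_colorable_two m n).of_hom (Embedding.complEquiv hembed).toHom)

/-- No complete bridge graph that is a minimally connected prime graph can be generated
from a minimal prime graph: if `Γ` is a minimal prime graph and `Γ*` has exactly one more
vertex, containing a vertex `α` whose deletion leaves an induced subgraph isomorphic to
`Γ`, then `Γ*` is not isomorphic to any `B_{m,n}` with `m ≥ n > 1` or `m ∈ {1,2}`, `n = 1`. -/
theorem stmt4 {V W : Type} [Fintype V] [Fintype W]
    (Γ : SimpleGraph V) (hΓ : IsMPG Γ)
    (Γstar : SimpleGraph W) (hcard : Fintype.card W = Fintype.card V + 1)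
    (α : W) (hgen : Nonempty ((Γstar.induce {w | w ≠ α}) ≃g Γ))
    (m n : ℕ) (hmn : (n ≤ m ∧ 1 < n) ∨ ((m = 1 ∨ m = 2) ∧ n = 1)) :
    ¬ Nonempty (Γstar ≃g completeBridgeGraph m n) :=
  stmt4_general Γ hΓ Γstar α hgen m n
end

section
/- Let Γ be a finite simple graph whose complement is triangle-free and 3-colorable, and suppose the diameter of Γ is exactly 3. Then the complement of Γ is 2-colorable (bipartite). -/
/-
Pick `u`, `v` at distance 3 in `Γ`. They are non-adjacent and have no common neighbour, so
every vertex is adjacent to `u` or to `v` in `Γᶜ`. Colouring a vertex by whether it is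
`Γᶜ`-adjacent to `v` is then proper: two `Γᶜ`-adjacent vertices of the same colour would span a
triangle of `Γᶜ` with `v`, or with `u`.
-/

open SimpleGraph

namespace SimpleGraph

variable {V : Type*} (G : SimpleGraph V)

lemma exists_edist_eq_of_diam_eq {n : ℕ} (hn : n ≠ 0) (hdiam : G.diam = n) :
    ∃ u v, G.edist u v = n := by
  have hne : G.diam ≠ 0 := hdiam ▸ hn
  have : Nonempty V := (G.nontrivial_of_diam_ne_zero hne).to_nonempty
  have htop := G.ediam_ne_top_of_diam_ne_zero hne
  obtain ⟨u, v, huv⟩ := G.exists_edist_eq_ediam_of_ne_top htop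
  refine ⟨u, v, ?_⟩
  rw [huv, ← hdiam, diam, ENat.natCast_toNat htop]

lemma compl_adj_or_compl_adj_of_two_lt_edist {u v : V} (huv : 2 < G.edist u v) (w : V) :
    Gᶜ.Adj u w ∨ Gᶜ.Adj v w := by
  by_contra! h
  have hle : ∀ x, ¬Gᶜ.Adj x w → G.edist x w ≤ 1 := fun x hx ↦ by
    rw [edist_le_one_iff_adj_or_eq]
    simp only [compl_adj, not_and, not_not] at hx
    tauto
  have := calc G.edist u v ≤ G.edist u w + G.edist w v := G.edist_triangle
    _ ≤ 1 + 1 := by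
      rw [edist_comm (u := w)]
      exact add_le_add (hle u h.1) (hle v h.2)
    _ = 2 := by norm_num
  exact lt_irrefl _ (huv.trans_le this)

lemma colorable_two_of_cliqueFree_three_of_forall_adj (hG : G.CliqueFree 3) {u v : V}
    (huv : ∀ w, G.Adj u w ∨ G.Adj v w) : G.Colorable 2 := by
  classical
  refine (Coloring.mk (fun w ↦ decide (G.Adj v w)) fun {a b} hab hcol ↦ ?_).colorable
  by_cases hva : G.Adj v a
  · have hvb : G.Adj v b := by simpa [hva] using hcol.symm
    exact hG _ (is3Clique_triple_iff.mpr ⟨hva, hvb, hab⟩)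
  · have hvb : ¬G.Adj v b := by simpa [hva] using hcol.symm
    exact hG _ (is3Clique_triple_iff.mpr
      ⟨(huv a).resolve_right hva, (huv b).resolve_right hvb, hab⟩)

end SimpleGraph

theorem stmt7_general {V : Type} (Γ : SimpleGraph V)
    (htf : Γᶜ.CliqueFree 3) (hdiam : Γ.diam = 3) :
    Γᶜ.Colorable 2 := by
  obtain ⟨u, v, huv⟩ := Γ.exists_edist_eq_of_diam_eq (by norm_num) hdiam
  exact Γᶜ.colorable_two_of_cliqueFree_three_of_forall_adj htf
    (Γ.compl_adj_or_compl_adj_of_two_lt_edist (by rw [huv]; decide))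

/-- If the complement of `Γ` is triangle-free and 3-colorable and the diameter of `Γ` is
exactly 3, then the complement of `Γ` is 2-colorable. -/
theorem stmt7 {V : Type} [Fintype V] (Γ : SimpleGraph V)
    (htf : Γᶜ.CliqueFree 3) (hcol : Γᶜ.Colorable 3) (hdiam : Γ.diam = 3) :
    Γᶜ.Colorable 2 :=
  stmt7_general Γ htf hdiam
end

section
/- If Γ is a complete bridge graph that is a minimally connected prime graph (i.e., Γ ≅ B_{m,n} with m ≥ n > 1 or m ∈ {1,2}, n = 1) and Γ is self-complementary, then Γ is isomorphic to B_{2,2}. -/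
open SimpleGraph

/-!
A self-complementary graph on `N` vertices has exactly half of the `N.choose 2` possible edges,
so `N.choose 2` is even; this rules out `B_{1,1}` and `B_{2,1}`. For `m ≥ 3` the graph `B_{m,n}`
contains a triangle, while its complement is triangle-free (of any three vertices two lie on the
same side, hence are adjacent in `B_{m,n}`); an isomorphism `B_{m,n} ≃ B_{m,n}ᶜ` would preserve
triangle-freeness. Among the admissible pairs only `(m, n) = (2, 2)` remains.
-/

open Finset Fintype

namespace SimpleGraph

variable {V W : Type*} {G : SimpleGraph V} {H : SimpleGraph W}

def Iso.compl (e : G ≃g H) : Gᶜ ≃g Hᶜ :=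
  { e.toEquiv with map_rel_iff' := (Embedding.complEquiv e.toEmbedding).map_rel_iff' }

theorem Iso.cliqueFree_iff (e : G ≃g H) {k : ℕ} : G.CliqueFree k ↔ H.CliqueFree k :=
  ⟨fun h ↦ h.comap e.isContained', fun h ↦ h.comap e.isContained⟩

theorem card_edgeFinset_add_card_edgeFinset_compl [Fintype V] [DecidableEq V]
    (G : SimpleGraph V) [DecidableRel G.Adj] :
    #G.edgeFinset + #Gᶜ.edgeFinset = (card V).choose 2 := by
  rw [← card_union_of_disjoint (disjoint_edgeFinset.mpr disjoint_compl_right), ← edgeFinset_sup]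
  convert card_edgeFinset_top_eq_card_choose_two (V := V) using 3
  exact sup_compl_eq_top

theorem even_card_choose_two_of_iso_compl [Fintype V] (e : G ≃g Gᶜ) :
    Even ((card V).choose 2) := by
  classical
  rw [← card_edgeFinset_add_card_edgeFinset_compl G, e.card_edgeFinset_eq]
  exact ⟨_, rfl⟩

end SimpleGraph

theorem completeBridgeGraph_compl_cliqueFree_three (m n : ℕ) :
    (completeBridgeGraph m n)ᶜ.CliqueFree 3 := by
  intro s hs
  obtain ⟨x, y, z, hxy, hxz, hyz, rfl⟩ := card_eq_three.mp hs.card_eq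
  rw [is3Clique_triple_iff] at hs
  obtain ⟨⟨-, nxy⟩, ⟨-, nxz⟩, ⟨-, nyz⟩⟩ := hs
  rcases x with i | i <;> rcases y with j | j <;> rcases z with k | k <;>
    simp_all [completeBridgeGraph, bridgeAdj]

theorem completeBridgeGraph_not_cliqueFree_three {m : ℕ} (n : ℕ) (hm : 3 ≤ m) :
    ¬(completeBridgeGraph m n).CliqueFree 3 := by
  intro h
  apply h {Sum.inl ⟨0, by omega⟩, Sum.inl ⟨1, by omega⟩, Sum.inl ⟨2, by omega⟩}
  simp [is3Clique_triple_iff, completeBridgeGraph, bridgeAdj]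

theorem le_two_of_completeBridgeGraph_iso_compl {m n : ℕ}
    (g : completeBridgeGraph m n ≃g (completeBridgeGraph m n)ᶜ) : m ≤ 2 := by
  by_contra! hm
  exact completeBridgeGraph_not_cliqueFree_three n hm
    (g.cliqueFree_iff.mpr (completeBridgeGraph_compl_cliqueFree_three m n))

/-- If `Γ` is a complete bridge graph that is a minimally connected prime graph and `Γ`
is self-complementary, then `Γ` is isomorphic to `B_{2,2}`. -/
theorem stmt12 {V : Type} [Fintype V] (Γ : SimpleGraph V) (m n : ℕ)
    (hmn : (n ≤ m ∧ 1 < n) ∨ ((m = 1 ∨ m = 2) ∧ n = 1))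
    (hiso : Nonempty (Γ ≃g completeBridgeGraph m n))
    (hsc : Nonempty (Γ ≃g Γᶜ)) :
    Nonempty (Γ ≃g completeBridgeGraph 2 2) := by
  obtain ⟨e⟩ := hiso
  obtain ⟨f⟩ := hsc
  have g : completeBridgeGraph m n ≃g (completeBridgeGraph m n)ᶜ := (e.symm.trans f).trans e.compl
  have hm := le_two_of_completeBridgeGraph_iso_compl g
  have hchoose := even_card_choose_two_of_iso_compl g
  rw [card_sum, Fintype.card_fin, Fintype.card_fin] at hchoose
  obtain ⟨rfl, rfl⟩ : m = 2 ∧ n = 2 := by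
    rcases hmn with ⟨hnm, hn⟩ | ⟨rfl | rfl, rfl⟩
    · omega
    · exact absurd hchoose (by decide)
    · exact absurd hchoose (by decide)
  exact ⟨e⟩
end
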